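/- Let ε > 0 be a real number with 2/18 + ε/2 < 1/8. Then there exists a constant C > 0 such that for every even natural number n ≥ 2, Σ_{(ℓ₁,ℓ₂,ℓ₃,ℓ₄) ∈ R_n} (n/2)! / (ℓ₁!·ℓ₂!·ℓ₃!·ℓ₄!) ≤ C·n³·2^{α(ε)·n}, where R_n = {(ℓ₁,ℓ₂,ℓ₃,ℓ₄) ∈ ℕ⁴ : ℓ₁ + ℓ₂ + ℓ₃ + ℓ₄ = n/2 and ℓ₁ ≤ (2/18 + ε/2)·n} and α(ε) = (1/2)·log₂(1/2) − (2/18 + ε/2)·log₂(2/18 + ε/2) − (7/18 − ε/2)·log₂(7/54 − ε/6). -/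

import Mathlib

/-! By the multinomial theorem with weights `(p, y, y, y)`, `p = 2/18 + ε/2`, `y = 7/54 - ε/6`,
`p + 3y = 1/2`, each term `m!/(ℓ₁!ℓ₂!ℓ₃!ℓ₄!)` (`m = n/2`) is at most `2⁻ᵐ p^(-ℓ₁) y^(ℓ₁ - m)`.
As `p ≤ y` this grows with `ℓ₁`, so on `ℓ₁ ≤ pn` it is at most its value at `ℓ₁ = pn`, which is
`2^(α(ε) n)`; there are at most `(m + 1)³ ≤ n³` terms. -/

open Finset Real
open scoped Nat

theorem factorial_div_prod_factorial_mul_prod_pow_le {ι R : Type*} [Fintype ι] [Semifield R]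
    [LinearOrder R] [IsStrictOrderedRing R] (k : ι → ℕ) {x : ι → R} (hx : ∀ i, 0 ≤ x i) :
    ((∑ i, k i)! : R) / (∏ i, ((k i)! : R)) * ∏ i, x i ^ k i ≤
      (∑ i, x i) ^ ∑ i, k i := by
  classical
  have hk : ((∑ i, k i)! : R) / ∏ i, ((k i)! : R) = Nat.multinomial univ k := by
    rw [div_eq_iff (by positivity), ← Nat.multinomial_spec univ k]
    push_cast; ring
  rw [hk, sum_pow_eq_sum_piAntidiag]
  exact single_le_sum (f := fun k ↦ (Nat.multinomial univ k : R) * ∏ i, x i ^ k i)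
    (fun j _ ↦ mul_nonneg (by positivity) (prod_nonneg fun i _ ↦ pow_nonneg (hx i) _))
    (by simp)

theorem factorial_div_factorial_four_mul_le {R : Type*} [Semifield R]
    [LinearOrder R] [IsStrictOrderedRing R] {x y : R} (hx : 0 ≤ x) (hy : 0 ≤ y) (a b c d : ℕ) :
    ((a + b + c + d)! : R) / (a ! * b ! * c ! * d !) * (x ^ a * y ^ (b + c + d)) ≤
      (x + 3 * y) ^ (a + b + c + d) := by
  have := factorial_div_prod_factorial_mul_prod_pow_le (R := R) ![a, b, c, d]
    (x := ![x, y, y, y]) (by intro i; fin_cases i <;> simpa)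
  simp only [Fin.sum_univ_four, Fin.prod_univ_four, Matrix.cons_val] at this
  convert this using 2 <;> ring

theorem rpow_neg_mul_rpow_sub_le {p y : ℝ} (hp : 0 < p) (hpy : p ≤ y) {a t : ℝ} (hat : a ≤ t)
    (m : ℝ) : p ^ (-a) * y ^ (a - m) ≤ p ^ (-t) * y ^ (t - m) := by
  have hy : 0 < y := hp.trans_le hpy
  have key : ∀ s : ℝ, p ^ (-s) * y ^ (s - m) = (y / p) ^ s * y ^ (-m) := fun s ↦ by
    rw [div_rpow hy.le hp.le, rpow_neg hp.le, rpow_sub hy, rpow_neg hy.le]; ring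
  rw [key, key]
  gcongr
  exact (one_le_div hp).2 hpy

theorem factorial_div_factorial_four_le {p y t : ℝ} (hp : 0 < p) (hpy : p ≤ y) (a b c d : ℕ)
    (ha : (a : ℝ) ≤ t) :
    ((a + b + c + d)! : ℝ) / (a ! * b ! * c ! * d !) ≤
      (p + 3 * y) ^ (a + b + c + d) * (p ^ (-t) * y ^ (t - (a + b + c + d : ℕ))) := by
  have hy : 0 < y := hp.trans_le hpy
  set w : ℝ := p ^ (-(a : ℝ)) * y ^ ((a : ℝ) - (a + b + c + d : ℕ)) with hw
  have hinv : p ^ a * y ^ (b + c + d) * w = 1 := by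
    rw [hw, show (a : ℝ) - (a + b + c + d : ℕ) = -((b + c + d : ℕ) : ℝ) by push_cast; ring,
      rpow_neg hp.le, rpow_neg hy.le, rpow_natCast, rpow_natCast]
    field_simp
  calc ((a + b + c + d)! : ℝ) / (a ! * b ! * c ! * d !)
      = (a + b + c + d)! / (a ! * b ! * c ! * d !) * (p ^ a * y ^ (b + c + d)) * w := by
        rw [mul_assoc _ _ w, hinv, mul_one]
    _ ≤ (p + 3 * y) ^ (a + b + c + d) * w := by
      gcongr
      exact factorial_div_factorial_four_mul_le hp.le hy.le a b c d
    _ ≤ _ := mul_le_mul_of_nonneg_left (rpow_neg_mul_rpow_sub_le hp hpy ha _) (by positivity)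

theorem two_rpow_entropy_mul {A p y : ℝ} (hA : 0 < A) (hp : 0 < p) (hy : 0 < y) (u q t : ℝ) :
    (2 : ℝ) ^ ((u * (log A / log 2) - p * (log p / log 2) - q * (log y / log 2)) * t) =
      A ^ (u * t) * (p ^ (-(p * t)) * y ^ (-(q * t))) := by
  have h : ∀ {x : ℝ}, 0 < x → ∀ s, (2 : ℝ) ^ (log x / log 2 * s) = x ^ s := fun hx s ↦ by
    rw [log_div_log, rpow_mul (by norm_num), rpow_logb (by norm_num) (by norm_num) hx]
  rw [← h hA, ← h hp, ← h hy, ← rpow_add two_pos, ← rpow_add two_pos]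
  ring_nf

theorem card_le_of_forall_sum_eq (m : ℕ) (S : Finset (ℕ × ℕ × ℕ × ℕ))
    (hS : ∀ l ∈ S, l.1 + l.2.1 + l.2.2.1 + l.2.2.2 = m) : #S ≤ (m + 1) ^ 3 := by
  calc #S ≤ #(range (m + 1) ×ˢ range (m + 1) ×ˢ range (m + 1)) := by
        refine card_le_card_of_injOn (fun l ↦ (l.1, l.2.1, l.2.2.1)) (fun l hl ↦ ?_) ?_
        · have := hS l hl
          simp only [coe_product, coe_range, Set.mem_prod, Set.mem_Iio]
          omega
        · intro l hl l' hl' h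
          have := hS l hl
          have := hS l' hl'
          simp only [Prod.mk.injEq] at h
          ext <;> omega
    _ = (m + 1) ^ 3 := by simp [card_product]; ring

theorem sum_factorial_div_factorial_four_le {p y : ℝ} (hp : 0 < p) (hpy : p ≤ y)
    (hpy_sum : p + 3 * y = 1 / 2) {n : ℕ} (hn : 2 ≤ n) (hn_even : Even n) :
    ∑ l ∈ (range (n / 2 + 1) ×ˢ range (n / 2 + 1) ×ˢ range (n / 2 + 1) ×ˢ
          range (n / 2 + 1)).filter (fun l : ℕ × ℕ × ℕ × ℕ =>
            l.1 + l.2.1 + l.2.2.1 + l.2.2.2 = n / 2 ∧ (l.1 : ℝ) ≤ p * n),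
      ((n / 2)! : ℝ) / (l.1 ! * l.2.1 ! * l.2.2.1 ! * l.2.2.2 !) ≤
    n ^ 3 * ((1 / 2) ^ (n / 2) * (p ^ (-(p * n)) * y ^ (-(3 * y * n)))) := by
  have hn_half : ((n / 2 : ℕ) : ℝ) = n / 2 :=
    Nat.cast_div_charZero (even_iff_two_dvd.1 hn_even)
  have hy : 0 < y := hp.trans_le hpy
  refine (sum_le_card_nsmul _ _ ((1 / 2) ^ (n / 2) * (p ^ (-(p * n)) * y ^ (-(3 * y * n))))
    fun l hl ↦ ?_).trans ?_
  · obtain ⟨-, hl_sum, hl_le⟩ := mem_filter.1 hl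
    have := factorial_div_factorial_four_le (y := y) hp hpy l.1 l.2.1 l.2.2.1 l.2.2.2 hl_le
    rwa [hl_sum, hpy_sum, show p * n - (n / 2 : ℕ) = -(3 * y * n) by
      linear_combination (n : ℝ) * hpy_sum - hn_half] at this
  · rw [nsmul_eq_mul]
    gcongr
    norm_cast
    refine (card_le_of_forall_sum_eq (n / 2) _ fun l hl ↦ ?_).trans
      (Nat.pow_le_pow_left ?_ 3)
    · exact (mem_filter.1 hl).2.1
    · omega

/-- for real `ε > 0` with `2/18 + ε/2 < 1/8`, there is a constant `C > 0`
such that for every even `n ≥ 2`,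
`∑_{(ℓ₁,ℓ₂,ℓ₃,ℓ₄) ∈ R_n} (n/2)!/(ℓ₁!ℓ₂!ℓ₃!ℓ₄!) ≤ C · n³ · 2^(α(ε)·n)`, where
`R_n = {ℓ ∈ ℕ⁴ : ℓ₁+ℓ₂+ℓ₃+ℓ₄ = n/2, ℓ₁ ≤ (2/18+ε/2)n}` and
`α(ε) = (1/2)log₂(1/2) − (2/18+ε/2)log₂(2/18+ε/2) − (7/18−ε/2)log₂(7/54−ε/6)`. -/
theorem stmt_19 (ε : ℝ) (hε : 0 < ε) (hε' : 2 / 18 + ε / 2 < 1 / 8) :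
    ∃ C : ℝ, 0 < C ∧ ∀ n : ℕ, 2 ≤ n → Even n →
      (∑ l ∈ (Finset.range (n / 2 + 1) ×ˢ Finset.range (n / 2 + 1) ×ˢ
          Finset.range (n / 2 + 1) ×ˢ Finset.range (n / 2 + 1)).filter
            (fun l : ℕ × ℕ × ℕ × ℕ => l.1 + l.2.1 + l.2.2.1 + l.2.2.2 = n / 2 ∧
              (l.1 : ℝ) ≤ (2 / 18 + ε / 2) * n),
        ((n / 2).factorial : ℝ) /
          (l.1.factorial * l.2.1.factorial * l.2.2.1.factorial * l.2.2.2.factorial))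
      ≤ C * n ^ 3 *
        (2 : ℝ) ^ (((1 / 2) * (Real.log (1 / 2) / Real.log 2)
          - (2 / 18 + ε / 2) * (Real.log (2 / 18 + ε / 2) / Real.log 2)
          - (7 / 18 - ε / 2) * (Real.log (7 / 54 - ε / 6) / Real.log 2)) * n) := by
  have hp : 0 < 2 / 18 + ε / 2 := by positivity
  have hpy : 2 / 18 + ε / 2 ≤ 7 / 54 - ε / 6 := by linarith
  refine ⟨1, one_pos, fun n hn hn_even => ?_⟩
  rw [two_rpow_entropy_mul one_half_pos hp (hp.trans_le hpy), one_mul,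
    show 7 / 18 - ε / 2 = 3 * (7 / 54 - ε / 6) by ring]
  convert sum_factorial_div_factorial_four_le hp hpy (by ring) hn hn_even using 4
  rw [← rpow_natCast, Nat.cast_div_charZero (even_iff_two_dvd.1 hn_even)]
  ring_nf
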